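/- arXiv:2001.04411 — 2 statements merged into one kernel-verified Lean document; each statement's English description precedes it below -/
import Mathlib

section
/- With the setup of ≤_O: every element w of W(I,J,K) = W^{J∪K} has minimal length in its coset w W_K W_{I,J}; that is, for all a ∈ W_K and x ∈ W_I, ℓ(w a x x*) ≥ ℓ(w). -/
/-!
Since `W_I` and `W_J` commute, `w a x x* = w (a x*) x`. As `a x* ∈ W_{J ∪ K}` and
`w ∈ W^{J ∪ K}`, `ℓ (w a x*) = ℓ w + ℓ (a x*)`. No simple reflection of `J` lies in `W_K`, so
`a ∈ W^J` and likewise `ℓ (a x*) = ℓ a + ℓ x*`. Finally `ℓ x ≤ ℓ x*`, because `σ` is an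
isomorphism `W_I ≅ W_J` matching simple reflections; hence
`ℓ (w a x x*) ≥ ℓ w + ℓ a + ℓ x* - ℓ x ≥ ℓ w`.

The additivity `ℓ (w v) = ℓ w + ℓ v` for `w ∈ W^L`, `v ∈ W_L` rests on the strong exchange
condition. It comes from the permutation representation of `W` on `W × ZMod 2` in which `s i`
acts by `(t, e) ↦ (s i t s i, e + [t = s i])`: it makes the parity of the number of occurrences
of `t` in the right inversion sequence of a word depend only on the element the word represents.
-/

section BruhatSetup

variable {B : Type*} {W : Type*} [Group W] {M : CoxeterMatrix B}

/-- Strong Bruhat order: `u ≤ v` iff every reduced word for `v` has a sublist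
that is a reduced word for `u`. -/
def BruhatLE (cs : CoxeterSystem M W) (u v : W) : Prop :=
  ∀ ω : List B, cs.IsReduced ω → cs.wordProd ω = v →
    ∃ ω' : List B, List.Sublist ω' ω ∧ cs.IsReduced ω' ∧ cs.wordProd ω' = u

/-- Strict strong Bruhat order. -/
def BruhatLT (cs : CoxeterSystem M W) (u v : W) : Prop :=
  BruhatLE cs u v ∧ u ≠ v

/-- The standard parabolic subgroup `W_L` generated by the simple reflections in `L`. -/
def parab (cs : CoxeterSystem M W) (L : Set B) : Subgroup W :=
  Subgroup.closure (cs.simple '' L)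

/-- The set `W^L` of minimal length coset representatives for `W / W_L`. -/
def minReps (cs : CoxeterSystem M W) (L : Set B) : Set W :=
  {w : W | ∀ i ∈ L, cs.length w < cs.length (w * cs.simple i)}

/-- Right weak order: `v ≤_R w` iff `ℓ(w) = ℓ(w v⁻¹) + ℓ(v)`. -/
def leR (cs : CoxeterSystem M W) (v w : W) : Prop :=
  cs.length w = cs.length (w * v⁻¹) + cs.length v

/-- The setup of the order `≤_O`: `I`, `J`, `K` are pairwise disjoint and pairwise
disconnected subsets of the simple system (so that `W_{I∪J∪K} = W_I × W_J × W_K`),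
and `σ : x ↦ x*` restricts to an isomorphism of Coxeter groups `W_I → W_J`
(a bijective group homomorphism sending simple reflections to simple reflections). -/
structure GoodSetup (cs : CoxeterSystem M W) (I J K : Set B) (σ : W → W) : Prop where
  disjIJ : Disjoint I J
  disjIK : Disjoint I K
  disjJK : Disjoint J K
  commIJ : ∀ i ∈ I, ∀ j ∈ J, Commute (cs.simple i) (cs.simple j)
  commIK : ∀ i ∈ I, ∀ k ∈ K, Commute (cs.simple i) (cs.simple k)
  commJK : ∀ j ∈ J, ∀ k ∈ K, Commute (cs.simple j) (cs.simple k)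
  directProd : ∀ x ∈ parab cs I, ∀ y ∈ parab cs J, ∀ z ∈ parab cs K,
    x * y * z = 1 → x = 1 ∧ y = 1 ∧ z = 1
  mulSigma : ∀ x ∈ parab cs I, ∀ y ∈ parab cs I, σ (x * y) = σ x * σ y
  bijSigma : Set.BijOn σ (parab cs I : Set W) (parab cs J : Set W)
  simpleSigma : ∀ i ∈ I, ∃ j ∈ J, σ (cs.simple i) = cs.simple j

/-- Membership in the coset `[w] = w · W_K · W_{I,J}` where `W_{I,J} = {x x* : x ∈ W_I}`. -/
def inCoset (cs : CoxeterSystem M W) (I K : Set B) (σ : W → W) (w u : W) : Prop :=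
  ∃ a ∈ parab cs K, ∃ x ∈ parab cs I, u = w * a * (x * σ x)

/-- The relation `≤_O`: `w' ≤_O w` iff some `u ∈ [w']` satisfies `u ≤ w` in Bruhat order. -/
def leO (cs : CoxeterSystem M W) (I K : Set B) (σ : W → W) (w' w : W) : Prop :=
  ∃ u, inCoset cs I K σ w' u ∧ BruhatLE cs u w

/-- The strict relation associated to `≤_O`. -/
def ltO (cs : CoxeterSystem M W) (I K : Set B) (σ : W → W) (w' w : W) : Prop :=
  leO cs I K σ w' w ∧ w' ≠ w

/-- `Min(w)`: the elements of the coset `[w]` of length `ℓ(w)`. -/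
def MinC (cs : CoxeterSystem M W) (I K : Set B) (σ : W → W) (w : W) : Set W :=
  {u : W | inCoset cs I K σ w u ∧ cs.length u = cs.length w}

/-- The set `M` of all elements having minimal length in their coset mod `W_K W_{I,J}`. -/
def Mset (cs : CoxeterSystem M W) (I J K : Set B) (σ : W → W) : Set W :=
  {u : W | ∃ w ∈ minReps cs (J ∪ K), u ∈ MinC cs I K σ w}


theorem conj_eq_iff_eq_conj {q t u : W} : q * t * q⁻¹ = u ↔ t = q⁻¹ * u * q := by
  constructor <;> rintro rfl <;> group

namespace CoxeterSystem

variable (cs : CoxeterSystem M W)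

local prefix:100 "π " => cs.wordProd
local prefix:100 "ℓ " => cs.length
local prefix:100 "ris " => cs.rightInvSeq

theorem simple_conj_eq_simple_iff {i : B} {t : W} :
    cs.simple i * t * cs.simple i = cs.simple i ↔ t = cs.simple i := by
  simpa [cs.inv_simple, mul_assoc] using
    conj_eq_iff_eq_conj (q := cs.simple i) (t := t) (u := cs.simple i)

open Classical in
noncomputable def reflectionPerm (i : B) : Equiv.Perm (W × ZMod 2) :=
  Function.Involutive.toPerm
    (fun p => (cs.simple i * p.1 * cs.simple i, p.2 + if p.1 = cs.simple i then 1 else 0))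
    (by
      rintro ⟨t, e⟩
      refine Prod.ext ?_ ?_
      · simp [mul_assoc]
      · dsimp only
        rw [cs.simple_conj_eq_simple_iff, add_assoc, CharTwo.add_self_eq_zero, add_zero])

open Classical in
theorem reflectionPerm_apply (i : B) (t : W) (e : ZMod 2) :
    cs.reflectionPerm i (t, e) =
      (cs.simple i * t * cs.simple i, e + if t = cs.simple i then 1 else 0) := rfl

open Classical in
theorem reflectionPerm_mul_pow_apply (i i' : B) (k : ℕ) (t : W) (e : ZMod 2) :
    ((cs.reflectionPerm i * cs.reflectionPerm i') ^ k) (t, e) =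
      ((cs.simple i * cs.simple i') ^ k * t * ((cs.simple i * cs.simple i') ^ k)⁻¹,
        e + ∑ j ∈ Finset.range (2 * k),
          if t = cs.simple i' * (cs.simple i * cs.simple i') ^ j then 1 else 0) := by
  set r := cs.simple i * cs.simple i'
  have hflip (n : ℕ) : (r ^ n)⁻¹ * cs.simple i' = cs.simple i' * r ^ n := by
    have h : cs.simple i' * r * (cs.simple i')⁻¹ = r⁻¹ := by
      simp [r, mul_assoc]
    rw [← inv_pow, ← h, conj_pow, cs.inv_simple, mul_assoc, cs.simple_mul_simple_self, mul_one]
  induction k generalizing t e with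
  | zero => simp
  | succ k ih =>
    rw [pow_succ', Equiv.Perm.mul_apply, ih, Equiv.Perm.mul_apply, reflectionPerm_apply,
      reflectionPerm_apply]
    have hcond (a : ℕ) : r ^ k * t * (r ^ k)⁻¹ = cs.simple i' * r ^ a ↔
        t = cs.simple i' * r ^ (2 * k + a) := by
      rw [conj_eq_iff_eq_conj, ← mul_assoc, hflip, mul_assoc, mul_assoc, ← pow_add, ← pow_add,
        show k + (a + k) = 2 * k + a by ring]
    have hcond_simple (x : W) : cs.simple i' * x * cs.simple i' = cs.simple i ↔
        x = cs.simple i' * r ^ 1 := by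
      simpa [cs.inv_simple, r, mul_assoc] using
        conj_eq_iff_eq_conj (q := cs.simple i') (t := x) (u := cs.simple i)
    refine Prod.ext ?_ ?_
    · simp only [pow_succ', mul_inv_rev, cs.inv_simple, r, mul_assoc]
    · have hcond0 := hcond 0
      rw [pow_zero, mul_one, add_zero] at hcond0
      dsimp only
      rw [hcond_simple, hcond, hcond0, show 2 * (k + 1) = 2 * k + 1 + 1 by ring,
        Finset.sum_range_succ, Finset.sum_range_succ]
      ring

open Classical in
theorem isLiftable_reflectionPerm : M.IsLiftable cs.reflectionPerm := by
  intro i i'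
  refine Equiv.ext fun ⟨t, e⟩ => ?_
  rw [reflectionPerm_mul_pow_apply, cs.simple_mul_simple_pow, one_mul, inv_one, mul_one,
    two_mul, Finset.sum_range_add]
  -- the `2 M` dihedral reflections `s i' (s i s i')^j` repeat with period `M`
  have hperiod (j : ℕ) :
      (if t = cs.simple i' * (cs.simple i * cs.simple i') ^ (M i i' + j) then (1 : ZMod 2)
        else 0) = if t = cs.simple i' * (cs.simple i * cs.simple i') ^ j then 1 else 0 := by
    rw [pow_add, cs.simple_mul_simple_pow, one_mul]
  rw [Finset.sum_congr rfl fun j _ => hperiod j, CharTwo.add_self_eq_zero, add_zero]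
  rfl

noncomputable def reflectionRep : W →* Equiv.Perm (W × ZMod 2) :=
  cs.lift ⟨cs.reflectionPerm, cs.isLiftable_reflectionPerm⟩

theorem reflectionRep_simple (i : B) : cs.reflectionRep (cs.simple i) = cs.reflectionPerm i :=
  cs.lift_apply_simple cs.isLiftable_reflectionPerm i

open Classical in
theorem reflectionRep_wordProd (ω : List B) (t : W) (e : ZMod 2) :
    cs.reflectionRep (π ω) (t, e) = (π ω * t * (π ω)⁻¹, e + ((ris ω).count t : ZMod 2)) := by
  induction ω generalizing e with
  | nil => simp
  | cons i ω ih =>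
    have hcond : π ω * t * (π ω)⁻¹ = cs.simple i ↔ (π ω)⁻¹ * cs.simple i * π ω = t := by
      rw [conj_eq_iff_eq_conj, eq_comm]
    rw [wordProd_cons, map_mul, Equiv.Perm.mul_apply, ih, reflectionRep_simple,
      reflectionPerm_apply, hcond]
    simp only [rightInvSeq, List.count_cons, beq_iff_eq, mul_inv_rev, cs.inv_simple, mul_assoc,
      Nat.cast_add, Nat.cast_ite, Nat.cast_one, Nat.cast_zero, add_assoc]

noncomputable def inversionParity (w t : W) : ZMod 2 := (cs.reflectionRep w (t, 0)).2

theorem reflectionRep_apply (w t : W) (e : ZMod 2) :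
    cs.reflectionRep w (t, e) = (w * t * w⁻¹, e + cs.inversionParity w t) := by
  obtain ⟨ω, rfl⟩ := cs.wordProd_surjective w
  rw [inversionParity, reflectionRep_wordProd, reflectionRep_wordProd, zero_add]

open Classical in
theorem inversionParity_wordProd (ω : List B) (t : W) :
    cs.inversionParity (π ω) t = (ris ω).count t := by
  rw [inversionParity, reflectionRep_wordProd, zero_add]

theorem inversionParity_mul (u v t : W) :
    cs.inversionParity (u * v) t =
      cs.inversionParity v t + cs.inversionParity u (v * t * v⁻¹) := by
  rw [inversionParity, map_mul, Equiv.Perm.mul_apply, reflectionRep_apply, reflectionRep_apply,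
    zero_add]

theorem inversionParity_one (t : W) : cs.inversionParity 1 t = 0 := by
  rw [← cs.wordProd_nil, inversionParity_wordProd]
  simp

theorem inversionParity_simple_self (i : B) :
    cs.inversionParity (cs.simple i) (cs.simple i) = 1 := by
  rw [← cs.wordProd_singleton, inversionParity_wordProd]
  simp

theorem inversionParity_self {t : W} (ht : cs.IsReflection t) : cs.inversionParity t t = 1 := by
  obtain ⟨u, i, rfl⟩ := ht
  have hcancel := cs.inversionParity_mul u u⁻¹ (u * cs.simple i * u⁻¹)
  have hconj : u⁻¹ * (u * cs.simple i * u⁻¹) * u⁻¹⁻¹ = cs.simple i := by group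
  rw [mul_inv_cancel, inversionParity_one, hconj] at hcancel
  rw [inversionParity_mul, inversionParity_mul, hconj, cs.inv_simple,
    cs.simple_mul_simple_cancel_right, inversionParity_simple_self]
  linear_combination -hcancel

theorem mem_rightInvSeq_of_isRightInversion {ω : List B} {t : W}
    (ht : cs.IsRightInversion (π ω) t) : t ∈ ris ω := by
  classical
  obtain ⟨β, hβ, hβω⟩ := cs.exists_isReduced (π ω * t)
  have hβt : t ∉ ris β := by
    intro hmem
    have := (cs.isRightInversion_of_mem_rightInvSeq hβ hmem).2
    rw [← hβω, mul_assoc, ht.1.mul_self, mul_one] at this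
    exact this.not_gt ht.2
  have hparity : cs.inversionParity (π ω) t = 1 := by
    have h := cs.inversionParity_mul (π ω * t) t t
    rw [mul_assoc, ht.1.mul_self, mul_one, ht.1.inv, one_mul,
      inversionParity_self cs ht.1, hβω, inversionParity_wordProd cs β,
      List.count_eq_zero.mpr hβt, Nat.cast_zero, add_zero] at h
    exact h
  by_contra hmem
  rw [inversionParity_wordProd, List.count_eq_zero.mpr hmem, Nat.cast_zero] at hparity
  exact zero_ne_one hparity

theorem exists_isReduced_sublist (ω : List B) :
    ∃ ζ : List B, ζ.Sublist ω ∧ cs.IsReduced ζ ∧ π ζ = π ω := by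
  induction ω using List.reverseRecOn with
  | nil => exact ⟨[], List.Sublist.slnil, by simp [IsReduced], rfl⟩
  | append_singleton ω i ih =>
    obtain ⟨ζ, hsub, hζ, hprod⟩ := ih
    have hprod' : π ζ * cs.simple i = π (ω ++ [i]) := by
      rw [wordProd_append, wordProd_singleton, hprod]
    rcases cs.length_mul_simple (π ζ) i with hlen | hlen
    · refine ⟨ζ ++ [i], hsub.append (List.Sublist.refl _), ?_, ?_⟩
      · rw [IsReduced, wordProd_append, wordProd_singleton, hlen, hζ.eq, List.length_append,
          List.length_singleton]
      · rw [wordProd_append, wordProd_singleton, hprod']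
    · -- a descent of a reduced word is realised by deleting one of its letters
      obtain ⟨j, hj, hjt⟩ := List.getElem_of_mem
        (cs.mem_rightInvSeq_of_isRightInversion (ω := ζ) ⟨cs.isReflection_simple i, by omega⟩)
      have herase := cs.wordProd_mul_getD_rightInvSeq ζ j
      rw [List.getD_eq_getElem _ _ hj, hjt, hprod'] at herase
      rw [length_rightInvSeq] at hj
      refine ⟨ζ.eraseIdx j,
        ((List.eraseIdx_sublist ζ j).trans hsub).trans (List.sublist_append_left ω [i]), ?_,
        herase.symm⟩
      rw [IsReduced, List.length_eraseIdx_of_lt hj, ← herase, ← hprod', ← hζ.eq]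
      omega

theorem rightInvSeq_append (α β : List B) :
    ris (α ++ β) = (ris α).map (fun t => (π β)⁻¹ * t * π β) ++ ris β := by
  induction α with
  | nil => simp
  | cons i α ih =>
    simp only [List.cons_append, rightInvSeq, ih, List.map_cons, wordProd_append, mul_inv_rev,
      mul_assoc]

variable {I J L L' : Set B} {σ : W → W}

theorem simple_mem_parab {i : B} (hi : i ∈ L) : cs.simple i ∈ parab cs L :=
  Subgroup.subset_closure ⟨i, hi, rfl⟩

theorem parab_mono (h : L ⊆ L') : parab cs L ≤ parab cs L' :=
  Subgroup.closure_mono (Set.image_mono h)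

theorem wordProd_mem_parab {ω : List B} (hω : ∀ i ∈ ω, i ∈ L) : π ω ∈ parab cs L := by
  induction ω with
  | nil => exact one_mem _
  | cons i ω ih =>
    rw [wordProd_cons]
    exact mul_mem (cs.simple_mem_parab (hω i List.mem_cons_self))
      (ih fun j hj => hω j (List.mem_cons_of_mem i hj))

theorem exists_word_of_mem_parab {x : W} (hx : x ∈ parab cs L) :
    ∃ ω : List B, (∀ i ∈ ω, i ∈ L) ∧ π ω = x := by
  induction hx using Subgroup.closure_induction with
  | mem y hy =>
    obtain ⟨i, hi, rfl⟩ := hy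
    exact ⟨[i], by simpa using hi, cs.wordProd_singleton i⟩
  | one => exact ⟨[], by simp, cs.wordProd_nil⟩
  | mul y z _ _ hy hz =>
    obtain ⟨ω, hωL, rfl⟩ := hy
    obtain ⟨ζ, hζL, rfl⟩ := hz
    exact ⟨ω ++ ζ, fun i hi => (List.mem_append.mp hi).elim (hωL i) (hζL i),
      cs.wordProd_append ω ζ⟩
  | inv y _ hy =>
    obtain ⟨ω, hωL, rfl⟩ := hy
    exact ⟨ω.reverse, fun i hi => hωL i (List.mem_reverse.mp hi), cs.wordProd_reverse ω⟩

theorem exists_isReduced_of_mem_parab {x : W} (hx : x ∈ parab cs L) :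
    ∃ ω : List B, cs.IsReduced ω ∧ (∀ i ∈ ω, i ∈ L) ∧ π ω = x := by
  obtain ⟨ω, hωL, rfl⟩ := cs.exists_word_of_mem_parab hx
  obtain ⟨ζ, hsub, hζ, hprod⟩ := cs.exists_isReduced_sublist ω
  exact ⟨ζ, hζ, fun i hi => hωL i (hsub.subset hi), hprod⟩

theorem exists_mem_simple_eq_of_simple_mem_parab {i : B} (hi : cs.simple i ∈ parab cs L) :
    ∃ j ∈ L, cs.simple j = cs.simple i := by
  obtain ⟨ω, hω, hωL, hprod⟩ := cs.exists_isReduced_of_mem_parab hi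
  have hlen : ω.length = 1 := by rw [← hω.eq, hprod, length_simple]
  obtain ⟨j, rfl⟩ := List.length_eq_one_iff.mp hlen
  exact ⟨j, hωL j (List.mem_singleton_self j), by rw [← hprod, wordProd_singleton]⟩

theorem exists_rightDescent_mem_of_mem_parab {z : W} (hz : z ∈ parab cs L) (hz1 : z ≠ 1) :
    ∃ i ∈ L, cs.IsRightDescent z i := by
  obtain ⟨ω, hω, hωL, rfl⟩ := cs.exists_isReduced_of_mem_parab hz
  obtain rfl | ⟨ζ, i, rfl⟩ := ω.eq_nil_or_concat'
  · exact absurd cs.wordProd_nil hz1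
  refine ⟨i, hωL i (by simp), ?_⟩
  have hle := cs.length_wordProd_le ζ
  rw [IsRightDescent, wordProd_append, wordProd_singleton, simple_mul_simple_cancel_right,
    ← wordProd_singleton, ← wordProd_append, hω.eq, List.length_append, List.length_singleton]
  omega

theorem rightInvSeq_mem_parab {ω : List B} (hω : ∀ i ∈ ω, i ∈ L) {t : W} (ht : t ∈ ris ω) :
    t ∈ parab cs L := by
  induction ω with
  | nil => simp at ht
  | cons i ω ih =>
    have hωL : ∀ j ∈ ω, j ∈ L := fun j hj => hω j (List.mem_cons_of_mem i hj)
    rcases List.mem_cons.mp ht with rfl | ht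
    · exact mul_mem (mul_mem (inv_mem (cs.wordProd_mem_parab hωL))
        (cs.simple_mem_parab (hω i List.mem_cons_self))) (cs.wordProd_mem_parab hωL)
    · exact ih hωL ht

theorem simple_mem_parab_of_isRightDescent {a : W} {i : B} (ha : a ∈ parab cs L)
    (hi : cs.IsRightDescent a i) : cs.simple i ∈ parab cs L := by
  obtain ⟨ω, -, hωL, rfl⟩ := cs.exists_isReduced_of_mem_parab ha
  exact cs.rightInvSeq_mem_parab hωL
    (cs.mem_rightInvSeq_of_isRightInversion ⟨cs.isReflection_simple i, hi⟩)

theorem mem_minReps_of_mem_parab {a : W} (ha : a ∈ parab cs L)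
    (hL' : ∀ i ∈ L', cs.simple i ∉ parab cs L) : a ∈ minReps cs L' := by
  intro i hi
  by_contra hle
  exact hL' i hi (cs.simple_mem_parab_of_isRightDescent ha
    ((not_lt.mp hle).lt_of_ne (cs.length_mul_simple_ne a i)))

theorem length_mul_eq_add_of_forall_le {u v : W} (hu : ∀ z ∈ parab cs L, ℓ u ≤ ℓ (u * z))
    (hv : v ∈ parab cs L) : ℓ (u * v) = ℓ u + ℓ v := by
  obtain ⟨β, hβ, hβL, rfl⟩ := cs.exists_isReduced_of_mem_parab hv
  clear hv
  rw [hβ.eq]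
  induction β using List.reverseRecOn with
  | nil => simp
  | append_singleton β i ih =>
    have hβ' : cs.IsReduced β := by simpa using hβ.take β.length
    have hiL : i ∈ L := hβL i (by simp)
    have hβL' : ∀ j ∈ β, j ∈ L := fun j hj => hβL j (by simp [hj])
    have ih := ih hβ' hβL'
    rw [wordProd_append, wordProd_singleton, ← mul_assoc, List.length_append,
      List.length_singleton]
    rcases cs.length_mul_simple (u * π β) i with h | h
    · rw [h, ih, add_assoc]
    exfalso
    obtain ⟨γ, hγ, rfl⟩ := cs.exists_isReduced u
    have hmem := cs.mem_rightInvSeq_of_isRightInversion (ω := γ ++ β)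
      ⟨cs.isReflection_simple i, by rw [wordProd_append]; omega⟩
    rw [rightInvSeq_append, List.mem_append] at hmem
    rcases hmem with hmem | hmem
    · -- `s i` comes from a right inversion `t` of `π γ` lying in `W_L`
      obtain ⟨t, ht, hti⟩ := List.mem_map.mp hmem
      have htL : t ∈ parab cs L := by
        rw [show t = π β * cs.simple i * (π β)⁻¹ by rw [← hti]; group]
        exact mul_mem (mul_mem (cs.wordProd_mem_parab hβL') (cs.simple_mem_parab hiL))
          (inv_mem (cs.wordProd_mem_parab hβL'))
      exact (hu t htL).not_gt (cs.isRightInversion_of_mem_rightInvSeq hγ ht).2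
    · have := (cs.isRightInversion_of_mem_rightInvSeq hβ' hmem).2
      have hlen := hβ.eq
      rw [wordProd_append, wordProd_singleton, List.length_append, List.length_singleton,
        ← hβ'.eq] at hlen
      omega

theorem length_le_length_mul_of_mem_minReps {w z : W} (hw : w ∈ minReps cs L)
    (hz : z ∈ parab cs L) : ℓ w ≤ ℓ (w * z) := by
  -- compare with a shortest element `w * z₀` of `w W_L`: a descent of `z₀⁻¹` in `L` would be one
  -- of `w`
  set z₀ := Function.argminOn (fun z => ℓ (w * z)) (parab cs L : Set W) ⟨1, one_mem _⟩
  have hz₀ : z₀ ∈ parab cs L := Function.argminOn_mem _ _ _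
  have hmin : ∀ z ∈ parab cs L, ℓ (w * z₀) ≤ ℓ (w * z) :=
    fun z hz => Function.argminOn_le (fun z => ℓ (w * z)) (parab cs L : Set W) hz
  have hadd : ∀ v ∈ parab cs L, ℓ (w * z₀ * v) = ℓ (w * z₀) + ℓ v :=
    fun v => cs.length_mul_eq_add_of_forall_le fun z hz => by
      rw [mul_assoc]; exact hmin _ (mul_mem hz₀ hz)
  suffices hz₁ : z₀ = 1 by simpa [hz₁] using hmin z hz
  by_contra hne
  obtain ⟨i, hiL, hi⟩ :=
    cs.exists_rightDescent_mem_of_mem_parab (inv_mem hz₀) (inv_ne_one.mpr hne)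
  have h₁ := hadd _ (inv_mem hz₀)
  have h₂ := hadd _ (mul_mem (inv_mem hz₀) (cs.simple_mem_parab hiL))
  rw [mul_inv_cancel_right] at h₁
  rw [← mul_assoc, mul_inv_cancel_right] at h₂
  have := hw i hiL
  rw [IsRightDescent] at hi
  omega

theorem length_mul_of_mem_minReps {w v : W} (hw : w ∈ minReps cs L) (hv : v ∈ parab cs L) :
    ℓ (w * v) = ℓ w + ℓ v :=
  cs.length_mul_eq_add_of_forall_le (fun _ hz => cs.length_le_length_mul_of_mem_minReps hw hz) hv

theorem commute_of_mem_parab {L₁ L₂ : Set B}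
    (h : ∀ i ∈ L₁, ∀ j ∈ L₂, Commute (cs.simple i) (cs.simple j)) {x y : W}
    (hx : x ∈ parab cs L₁) (hy : y ∈ parab cs L₂) : Commute x y := by
  have hle : parab cs L₁ ≤ Subgroup.centralizer (parab cs L₂) := by
    rw [parab, parab, Subgroup.centralizer_closure, Subgroup.closure_le]
    rintro _ ⟨i, hi, rfl⟩ _ ⟨j, hj, rfl⟩
    exact (h i hi j hj).eq.symm
  exact (Subgroup.mem_centralizer_iff.mp (hle hx) y hy).symm

theorem map_one_of_map_mul
    (hmul : ∀ x ∈ parab cs I, ∀ y ∈ parab cs I, σ (x * y) = σ x * σ y) : σ 1 = 1 := by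
  simpa using hmul 1 (one_mem _) 1 (one_mem _)

theorem map_mem_parab_of_map_mul
    (hmul : ∀ x ∈ parab cs I, ∀ y ∈ parab cs I, σ (x * y) = σ x * σ y)
    (hsimple : ∀ i ∈ I, σ (cs.simple i) ∈ parab cs L) {x : W} (hx : x ∈ parab cs I) :
    σ x ∈ parab cs L := by
  obtain ⟨ω, hωI, rfl⟩ := cs.exists_word_of_mem_parab hx
  induction ω with
  | nil => rw [wordProd_nil, cs.map_one_of_map_mul hmul]; exact one_mem _
  | cons i ω ih =>
    have hωI' : ∀ j ∈ ω, j ∈ I := fun j hj => hωI j (List.mem_cons_of_mem i hj)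
    rw [wordProd_cons, hmul _ (cs.simple_mem_parab (hωI i List.mem_cons_self)) _
      (cs.wordProd_mem_parab hωI')]
    exact mul_mem (hsimple i (hωI i List.mem_cons_self)) (ih hωI' (cs.wordProd_mem_parab hωI'))

theorem exists_word_map_wordProd_eq
    (hmul : ∀ x ∈ parab cs I, ∀ y ∈ parab cs I, σ (x * y) = σ x * σ y)
    (hpre : ∀ j ∈ J, ∃ i ∈ I, σ (cs.simple i) = cs.simple j) {β : List B}
    (hβ : ∀ j ∈ β, j ∈ J) :
    ∃ ω : List B, (∀ i ∈ ω, i ∈ I) ∧ ω.length = β.length ∧ σ (π ω) = π β := by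
  induction β with
  | nil => exact ⟨[], by simp, rfl, cs.map_one_of_map_mul hmul⟩
  | cons j β ih =>
    obtain ⟨i, hi, hij⟩ := hpre j (hβ j List.mem_cons_self)
    obtain ⟨ω, hωI, hlen, hωβ⟩ := ih fun k hk => hβ k (List.mem_cons_of_mem j hk)
    refine ⟨i :: ω, fun k hk => (List.mem_cons.mp hk).elim (· ▸ hi) (hωI k), by simp [hlen], ?_⟩
    rw [wordProd_cons, wordProd_cons,
      hmul _ (cs.simple_mem_parab hi) _ (cs.wordProd_mem_parab hωI), hij, hωβ]

theorem length_le_length_of_bijOn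
    (hmul : ∀ x ∈ parab cs I, ∀ y ∈ parab cs I, σ (x * y) = σ x * σ y)
    (hsimple : ∀ i ∈ I, ∃ j, σ (cs.simple i) = cs.simple j)
    (hσ : Set.BijOn σ (parab cs I : Set W) (parab cs J : Set W)) {x : W} (hx : x ∈ parab cs I) :
    ℓ x ≤ ℓ (σ x) := by
  -- `W_J = σ (W_I)` is generated by the `σ (s i)`, and a simple reflection lying in a standard
  -- parabolic subgroup equals one of its generators
  have hpre : ∀ j ∈ J, ∃ i ∈ I, σ (cs.simple i) = cs.simple j := by
    intro j hj
    obtain ⟨y, hy, hyj⟩ := hσ.surjOn (cs.simple_mem_parab hj)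
    have hmem : cs.simple j ∈ parab cs {k | ∃ i ∈ I, σ (cs.simple i) = cs.simple k} := by
      rw [← hyj]
      refine cs.map_mem_parab_of_map_mul hmul (fun i hi => ?_) hy
      obtain ⟨k, hk⟩ := hsimple i hi
      exact hk ▸ cs.simple_mem_parab ⟨i, hi, hk⟩
    obtain ⟨k, ⟨i, hi, hik⟩, hkj⟩ := cs.exists_mem_simple_eq_of_simple_mem_parab hmem
    exact ⟨i, hi, hik.trans hkj⟩
  obtain ⟨β, hβ, hβJ, hβx⟩ := cs.exists_isReduced_of_mem_parab (hσ.mapsTo hx)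
  obtain ⟨ω, hωI, hlen, hωβ⟩ := cs.exists_word_map_wordProd_eq hmul hpre hβJ
  have hxω : x = π ω := hσ.injOn hx (cs.wordProd_mem_parab hωI) (by rw [hωβ, hβx])
  calc ℓ x ≤ ω.length := hxω ▸ cs.length_wordProd_le ω
    _ = ℓ (σ x) := by rw [hlen, ← hβ.eq, hβx]

end CoxeterSystem

theorem GoodSetup.simple_notMem_parab {cs : CoxeterSystem M W} {I J K : Set B} {σ : W → W}
    (h : GoodSetup cs I J K σ) {j : B} (hj : j ∈ J) : cs.simple j ∉ parab cs K := by
  intro hjK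
  have hj1 := (h.directProd 1 (one_mem _) _ (cs.simple_mem_parab hj) _ (inv_mem hjK)
    (by group)).2.1
  simpa [hj1] using cs.length_simple j

theorem statement_5 (cs : CoxeterSystem M W) (I J K : Set B) (σ : W → W)
    (h : GoodSetup cs I J K σ) :
    ∀ w ∈ minReps cs (J ∪ K), ∀ a ∈ parab cs K, ∀ x ∈ parab cs I,
      cs.length w ≤ cs.length (w * a * (x * σ x)) := by
  intro w hw a ha x hx
  have hσx : σ x ∈ parab cs J := h.bijSigma.mapsTo hx
  have hrw : w * a * (x * σ x) = w * (a * σ x) * x := by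
    rw [(cs.commute_of_mem_parab h.commIJ hx hσx).eq]
    group
  have hw_add : cs.length (w * (a * σ x)) = cs.length w + cs.length (a * σ x) :=
    cs.length_mul_of_mem_minReps hw (mul_mem (cs.parab_mono Set.subset_union_right ha)
      (cs.parab_mono Set.subset_union_left hσx))
  have ha_add : cs.length (a * σ x) = cs.length a + cs.length (σ x) :=
    cs.length_mul_of_mem_minReps
      (cs.mem_minReps_of_mem_parab ha fun _ hj => h.simple_notMem_parab hj) hσx
  have hσ_len : cs.length x ≤ cs.length (σ x) :=
    cs.length_le_length_of_bijOn h.mulSigma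
      (fun i hi => (h.simpleSigma i hi).imp fun _ => And.right) h.bijSigma hx
  have := cs.length_le_length_mul_add_right (w * (a * σ x)) x
  rw [hrw]
  omega

end BruhatSetup
end

section
/- With the setup of ≤_O: for every w ∈ W(I,J,K) and every v in the coset w W_K W_{I,J}, there exists u ∈ Min(w) such that u ≤ v in Bruhat order. Consequently Min(w) is exactly the set of Bruhat-minimal elements of the coset. -/
/-!
Write `v = w a x x*` with `a ∈ W_K` and `x ∈ W_I`. The three parabolic factors commute and
`w x` is again a minimal representative for `W_{J ∪ K}`, so `ℓ v = ℓ (w x) + ℓ x + ℓ a ≥ ℓ w`,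
and `Min(w)` consists of the shortest elements of the coset. If `ℓ v > ℓ w`, then either
`ℓ w < ℓ (w x) + ℓ x`, so that `w x` and `x` share a right inversion `t ∈ W_I` and
`v > v t* > v t* t = w a (x t) (x t)*` are Bruhat descents inside the coset, or `a ≠ 1` and
`v > v s` for a right descent `s ∈ K` of `a`. Descending in this way reaches `Min(w)`.

Descents `v t < v` along right inversions come from the strong exchange condition, which is
obtained from the reflection cocycle `W → (W → ℤˣ) ⋊ W`, `s ↦ (δ_s, s)`.
-/

section BruhatSetup

variable {B : Type*} {W : Type*} [Group W] {M : CoxeterMatrix B}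

theorem List.Nodup.prod_map_mulSingle_apply {α : Type*} [DecidableEq α] {l : List α}
    (hl : l.Nodup) (x : α) :
    (l.map (Pi.mulSingle · (-1 : ℤˣ))).prod x = if x ∈ l then -1 else 1 := by
  induction l with
  | nil => simp
  | cons r l ih =>
    rw [List.nodup_cons] at hl
    rw [List.map_cons, List.prod_cons, Pi.mul_apply, ih hl.2, Pi.mulSingle_apply]
    by_cases hx : x = r
    · subst hx; simp [hl.1]
    · simp [hx]

namespace CoxeterSystem

open List
open scoped Classical

def conjArrow : W →* MulAut (W → ℤˣ) where
  toFun u :=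
    { toFun := fun f x => f (u⁻¹ * x * u)
      invFun := fun f x => f (u * x * u⁻¹)
      left_inv := fun f => by funext x; group
      right_inv := fun f => by funext x; group
      map_mul' := fun _ _ => rfl }
  map_one' := by ext; simp
  map_mul' u v := by ext; simp [mul_assoc]

theorem conjArrow_apply (u : W) (f : W → ℤˣ) (x : W) :
    conjArrow u f x = f (u⁻¹ * x * u) := rfl

theorem conjArrow_mulSingle (u r : W) (c : ℤˣ) :
    conjArrow u (Pi.mulSingle r c) = Pi.mulSingle (u * r * u⁻¹) c := by
  funext x
  simp only [conjArrow_apply, Pi.mulSingle_apply]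
  congr 1
  apply propext
  constructor <;> rintro rfl <;> group

variable (cs : CoxeterSystem M W)

local prefix:100 "ℓ" => cs.length
local prefix:100 "π" => cs.wordProd

noncomputable def cocycleGen (i : B) : (W → ℤˣ) ⋊[conjArrow] W :=
  ⟨Pi.mulSingle (cs.simple i) (-1), cs.simple i⟩

theorem prod_map_cocycleGen (ω : List B) :
    (ω.map cs.cocycleGen).prod =
      ⟨((cs.leftInvSeq ω).map (Pi.mulSingle · (-1))).prod, π ω⟩ := by
  induction ω with
  | nil => rfl
  | cons i ω ih =>
    rw [map_cons, prod_cons, ih]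
    refine SemidirectProduct.ext ?_ ?_
    · show Pi.mulSingle (cs.simple i) (-1) * conjArrow (cs.simple i) _ = _
      rw [map_list_prod, map_map]
      simp [leftInvSeq, Function.comp_def, conjArrow_mulSingle]
    · simp [cocycleGen, wordProd_cons]

theorem isLiftable_cocycleGen : M.IsLiftable cs.cocycleGen := by
  intro i j
  have hpow : ∀ m, (cs.cocycleGen i * cs.cocycleGen j) ^ m =
      ((alternatingWord i j (2 * m)).map cs.cocycleGen).prod := by
    intro m
    induction m with
    | zero => rfl
    | succ m ih =>
      rw [pow_succ', ih, show 2 * (m + 1) = 2 * m + 1 + 1 by ring, alternatingWord_succ',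
        alternatingWord_succ']
      simp [mul_assoc]
  -- the left inversion sequence of the braid word is two copies of one list, so all signs cancel
  set m := M i j
  set L := cs.leftInvSeq (alternatingWord i j (2 * m))
  have hL : ∀ k (hk : k < 2 * m),
      L[k]'(by simpa [L] using hk) = cs.simple i * (cs.simple j * cs.simple i) ^ k := by
    intro k hk
    rw [getElem_leftInvSeq_alternatingWord cs i j m k hk, prod_alternatingWord_eq_mul_pow]
    simp [Nat.mul_add_div]
  have hdrop : L.drop m = L.take m := by
    apply List.ext_getElem (by simp [L]; omega)
    intro k h1 h2
    simp only [L, length_drop, length_leftInvSeq, length_alternatingWord] at h1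
    rw [getElem_drop, getElem_take, hL _ (by omega), hL _ (by omega), pow_add,
      simple_mul_simple_pow', one_mul]
  rw [hpow, prod_map_cocycleGen]
  refine SemidirectProduct.ext ?_ ?_
  · show (L.map (Pi.mulSingle · (-1))).prod = 1
    rw [← take_append_drop m L, hdrop, map_append, prod_append]
    exact funext fun x => Int.units_mul_self _
  · simp [prod_alternatingWord_eq_mul_pow, m]

noncomputable def cocycleHom : W →* (W → ℤˣ) ⋊[conjArrow] W :=
  cs.lift ⟨cs.cocycleGen, cs.isLiftable_cocycleGen⟩

theorem cocycleHom_wordProd (ω : List B) :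
    cs.cocycleHom (π ω) = (ω.map cs.cocycleGen).prod := by
  rw [wordProd, map_list_prod, map_map]
  congr 1
  exact map_congr_left fun i _ => cs.lift_apply_simple cs.isLiftable_cocycleGen i

theorem cocycleHom_right (w : W) : (cs.cocycleHom w).right = w := by
  obtain ⟨ω, rfl⟩ := cs.wordProd_surjective w
  rw [cocycleHom_wordProd, prod_map_cocycleGen]

/-- `reflCocycle w t = -1` iff the reflection `t` is a left inversion of `w`. -/
noncomputable def reflCocycle (w : W) : W → ℤˣ := (cs.cocycleHom w).left

theorem reflCocycle_wordProd (ω : List B) :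
    cs.reflCocycle (π ω) = ((cs.leftInvSeq ω).map (Pi.mulSingle · (-1))).prod := by
  rw [reflCocycle, cocycleHom_wordProd, prod_map_cocycleGen]

theorem reflCocycle_mul (u v x : W) :
    cs.reflCocycle (u * v) x = cs.reflCocycle u x * cs.reflCocycle v (u⁻¹ * x * u) := by
  simp only [reflCocycle, map_mul, SemidirectProduct.mul_left, cocycleHom_right, Pi.mul_apply,
    conjArrow_apply]

theorem reflCocycle_one (x : W) : cs.reflCocycle 1 x = 1 := by
  simpa using congrFun (cs.reflCocycle_wordProd []) x

theorem reflCocycle_inv (u x : W) :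
    cs.reflCocycle u⁻¹ (u⁻¹ * x * u) = (cs.reflCocycle u x)⁻¹ := by
  have h := cs.reflCocycle_mul u u⁻¹ x
  rw [mul_inv_cancel, reflCocycle_one] at h
  exact eq_inv_of_mul_eq_one_right h.symm

theorem mem_leftInvSeq_iff_reflCocycle {ω : List B} (hω : cs.IsReduced ω) (t : W) :
    t ∈ cs.leftInvSeq ω ↔ cs.reflCocycle (π ω) t = -1 := by
  rw [reflCocycle_wordProd, hω.nodup_leftInvSeq.prod_map_mulSingle_apply]
  split_ifs with h <;> simp [h]

theorem reflCocycle_self {t : W} (ht : cs.IsReflection t) : cs.reflCocycle t t = -1 := by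
  obtain ⟨u, i, rfl⟩ := ht
  have h₁ : u⁻¹ * (u * cs.simple i * u⁻¹) * u = cs.simple i := by group
  have h₂ :
      (u * cs.simple i)⁻¹ * (u * cs.simple i * u⁻¹) * (u * cs.simple i) = cs.simple i := by
    simp [mul_assoc]
  have hsi : cs.reflCocycle (cs.simple i) (cs.simple i) = -1 := by
    simpa using congrFun (cs.reflCocycle_wordProd [i]) (cs.simple i)
  have hinv := cs.reflCocycle_inv u (u * cs.simple i * u⁻¹)
  rw [h₁] at hinv
  rw [cs.reflCocycle_mul, cs.reflCocycle_mul, h₁, h₂, hsi, hinv, mul_comm, ← mul_assoc,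
    inv_mul_cancel, one_mul]

theorem isLeftInversion_iff_reflCocycle {w t : W} (ht : cs.IsReflection t) :
    cs.IsLeftInversion w t ↔ cs.reflCocycle w t = -1 := by
  obtain ⟨ω, hω, rfl⟩ := cs.exists_isReduced w
  refine ⟨fun h => ?_, fun h => cs.isLeftInversion_of_mem_leftInvSeq hω
    ((cs.mem_leftInvSeq_iff_reflCocycle hω t).2 h)⟩
  by_contra hne
  obtain ⟨ω', hω', hω'prod⟩ := cs.exists_isReduced (t * π ω)
  -- multiplying by `t` flips the sign at `t`, so `t` would also be a left inversion of `t * π ω`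
  have hflip : cs.reflCocycle (t * π ω) t = -1 := by
    rw [reflCocycle_mul, reflCocycle_self cs ht, inv_mul_cancel, one_mul,
      (Int.units_eq_one_or _).resolve_right hne, mul_one]
  have h' := (cs.isLeftInversion_of_mem_leftInvSeq hω'
    ((cs.mem_leftInvSeq_iff_reflCocycle hω' t).2 (hω'prod ▸ hflip))).2
  rw [← hω'prod, ← mul_assoc, ht.mul_self, one_mul] at h'
  exact lt_asymm h.2 h'

theorem mem_leftInvSeq_of_isLeftInversion {ω : List B} (hω : cs.IsReduced ω) {t : W}
    (h : cs.IsLeftInversion (π ω) t) : t ∈ cs.leftInvSeq ω :=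
  (cs.mem_leftInvSeq_iff_reflCocycle hω t).2 ((cs.isLeftInversion_iff_reflCocycle h.1).1 h)

theorem exists_wordProd_eraseIdx_eq_mul_left {ω : List B} (hω : cs.IsReduced ω) {t : W}
    (h : cs.IsLeftInversion (π ω) t) : ∃ j < ω.length, π (ω.eraseIdx j) = t * π ω := by
  obtain ⟨j, hj, rfl⟩ := List.getElem_of_mem (cs.mem_leftInvSeq_of_isLeftInversion hω h)
  rw [length_leftInvSeq] at hj
  refine ⟨j, hj, ?_⟩
  rw [← cs.getD_leftInvSeq_mul_wordProd, List.getD_eq_getElem]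

theorem exists_wordProd_eraseIdx_eq_mul_right {ω : List B} (hω : cs.IsReduced ω) {t : W}
    (h : cs.IsRightInversion (π ω) t) : ∃ j < ω.length, π (ω.eraseIdx j) = π ω * t := by
  have hconj : cs.IsLeftInversion (π ω) (π ω * t * (π ω)⁻¹) :=
    ⟨h.1.conj _, by simpa using h.2⟩
  obtain ⟨j, hj, hprod⟩ := cs.exists_wordProd_eraseIdx_eq_mul_left hω hconj
  exact ⟨j, hj, by rw [hprod]; group⟩

theorem isRightInversion_mul_simple_iff {w t : W} (ht : cs.IsReflection t) {i : B}
    (hne : t ≠ cs.simple i) :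
    cs.IsRightInversion (w * cs.simple i) t ↔
      cs.IsRightInversion w (cs.simple i * t * cs.simple i) := by
  have hconj : cs.IsReflection (cs.simple i * t * cs.simple i) := by
    simpa using ht.conj (cs.simple i)
  rw [← isLeftInversion_inv_iff, ← isLeftInversion_inv_iff,
    isLeftInversion_iff_reflCocycle cs ht, isLeftInversion_iff_reflCocycle cs hconj, mul_inv_rev,
    inv_simple, reflCocycle_mul, inv_simple]
  have hsi : cs.reflCocycle (cs.simple i) t = 1 := by
    simpa [Pi.mulSingle_apply, hne] using congrFun (cs.reflCocycle_wordProd [i]) t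
  rw [hsi, one_mul]

theorem exists_isReduced_sublist_wordProd_eq (ω : List B) :
    ∃ ω', ω' <+ ω ∧ cs.IsReduced ω' ∧ π ω' = π ω := by
  induction ω with
  | nil => exact ⟨[], Sublist.slnil, by simp [IsReduced], rfl⟩
  | cons i ω ih =>
    obtain ⟨ω', hsub, hred, hprod⟩ := ih
    rcases cs.length_simple_mul (π ω') i with hlen | hlen
    · refine ⟨i :: ω', hsub.cons_cons i, ?_, by rw [wordProd_cons, wordProd_cons, hprod]⟩
      rw [IsReduced, wordProd_cons, hlen, hred, length_cons]
    · have hinv : cs.IsLeftInversion (π ω') (cs.simple i) :=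
        ⟨cs.isReflection_simple i, by omega⟩
      obtain ⟨j, hj, hj'⟩ := cs.exists_wordProd_eraseIdx_eq_mul_left hred hinv
      refine ⟨ω'.eraseIdx j, ((ω'.eraseIdx_sublist j).trans hsub).cons i, ?_,
        by rw [hj', hprod, wordProd_cons]⟩
      rw [IsReduced, hj', length_eraseIdx_of_lt hj]
      have := hred.eq
      omega

theorem exists_isRightInversion_isLeftInversion_of_length_mul_lt {u v : W}
    (h : ℓ (u * v) < ℓ u + ℓ v) :
    ∃ t, cs.IsRightInversion u t ∧ cs.IsLeftInversion v t := by
  obtain ⟨n, hn⟩ : ∃ n, ℓ v = n := ⟨_, rfl⟩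
  induction n using Nat.strong_induction_on generalizing u v with
  | _ n ih =>
  have hv : v ≠ 1 := by rintro rfl; simp at h
  obtain ⟨i, hi⟩ := cs.exists_leftDescent_of_ne_one hv
  by_cases hu : cs.IsRightDescent u i
  · exact ⟨cs.simple i, (cs.isRightInversion_simple_iff_isRightDescent u i).2 hu,
      (cs.isLeftInversion_simple_iff_isLeftDescent v i).2 hi⟩
  have hv' := cs.isLeftDescent_iff.1 hi
  have hu' := cs.not_isRightDescent_iff.1 hu
  have hprod : u * cs.simple i * (cs.simple i * v) = u * v := by simp [mul_assoc]
  obtain ⟨t, ht, ht'⟩ := ih _ (by omega) (u := u * cs.simple i) (v := cs.simple i * v)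
    (by rw [hprod]; omega) rfl
  have hne : t ≠ cs.simple i := by
    rintro rfl
    have := ht'.2
    rw [simple_mul_simple_cancel_left] at this
    omega
  refine ⟨cs.simple i * t * cs.simple i, (cs.isRightInversion_mul_simple_iff ht.1 hne).1 ht,
    by simpa using ht'.1.conj (cs.simple i), ?_⟩
  have hsplit : cs.simple i * t * cs.simple i * v = cs.simple i * (t * (cs.simple i * v)) := by
    simp [mul_assoc]
  rw [hsplit]
  have h₁ := cs.length_mul_le (cs.simple i) (t * (cs.simple i * v))
  have h₂ := ht'.2
  rw [length_simple] at h₁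
  omega

end CoxeterSystem

open CoxeterSystem List

variable (cs : CoxeterSystem M W)

local prefix:100 "ℓ" => cs.length
local prefix:100 "π" => cs.wordProd

theorem bruhatLE_refl (v : W) : BruhatLE cs v v :=
  fun ω hω hprod => ⟨ω, Sublist.refl ω, hω, hprod⟩

variable {cs} in
theorem BruhatLE.trans {u v w : W} (huv : BruhatLE cs u v) (hvw : BruhatLE cs v w) :
    BruhatLE cs u w := by
  intro ω hω hprod
  obtain ⟨ω₁, hsub₁, hω₁, hprod₁⟩ := hvw ω hω hprod
  obtain ⟨ω₂, hsub₂, hω₂, hprod₂⟩ := huv ω₁ hω₁ hprod₁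
  exact ⟨ω₂, hsub₂.trans hsub₁, hω₂, hprod₂⟩

variable {cs} in
theorem BruhatLE.eq_of_length_le {u v : W} (h : BruhatLE cs u v) (hl : ℓ v ≤ ℓ u) :
    u = v := by
  obtain ⟨ω, hω, rfl⟩ := cs.exists_isReduced v
  obtain ⟨ω', hsub, hω', rfl⟩ := h ω hω rfl
  rw [hsub.eq_of_length_le (by rw [← hω.eq, ← hω'.eq]; exact hl)]

theorem bruhatLE_mul_of_isRightInversion {v t : W} (h : cs.IsRightInversion v t) :
    BruhatLE cs (v * t) v := by
  rintro ω hω rfl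
  obtain ⟨j, -, hj⟩ := cs.exists_wordProd_eraseIdx_eq_mul_right hω h
  obtain ⟨ω', hsub, hω', hprod⟩ := cs.exists_isReduced_sublist_wordProd_eq (ω.eraseIdx j)
  exact ⟨ω', hsub.trans (ω.eraseIdx_sublist j), hω', hprod.trans hj⟩

theorem exists_bruhatLE_length_eq_of_forall_exists_bruhatLE {S : Set W} {n : ℕ}
    (hS : ∀ v ∈ S, ℓ v ≠ n → ∃ v' ∈ S, BruhatLE cs v' v ∧ ℓ v' < ℓ v) :
    ∀ v ∈ S, ∃ u ∈ S, ℓ u = n ∧ BruhatLE cs u v := by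
  intro v hv
  induction hm : ℓ v using Nat.strong_induction_on generalizing v with
  | _ m ih =>
  by_cases hn : ℓ v = n
  · exact ⟨v, hv, hn, bruhatLE_refl cs v⟩
  obtain ⟨v', hv', hle, hlt⟩ := hS v hv hn
  obtain ⟨u, hu, hun, hle'⟩ := ih _ (hm ▸ hlt) v' hv' rfl
  exact ⟨u, hu, hun, hle'.trans hle⟩

section Parabolic

variable {cs} {L A C : Set B}

theorem simple_mem_parab {i : B} (hi : i ∈ L) : cs.simple i ∈ parab cs L :=
  Subgroup.subset_closure ⟨i, hi, rfl⟩

theorem parab_mono (h : A ⊆ C) : parab cs A ≤ parab cs C :=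
  Subgroup.closure_mono (Set.image_mono h)

theorem wordProd_mem_parab {ω : List B} (hω : ∀ i ∈ ω, i ∈ L) : π ω ∈ parab cs L := by
  induction ω with
  | nil => exact one_mem _
  | cons i ω ih =>
    rw [wordProd_cons]
    exact mul_mem (simple_mem_parab (hω i mem_cons_self))
      (ih fun j hj => hω j (mem_cons_of_mem i hj))

theorem exists_word_of_mem_parab {x : W} (hx : x ∈ parab cs L) :
    ∃ ω : List B, (∀ i ∈ ω, i ∈ L) ∧ π ω = x := by
  induction hx using Subgroup.closure_induction with
  | mem y hy =>
    obtain ⟨i, hi, rfl⟩ := hy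
    exact ⟨[i], by simpa using hi, cs.wordProd_singleton i⟩
  | one => exact ⟨[], by simp, cs.wordProd_nil⟩
  | mul y z _ _ ihy ihz =>
    obtain ⟨ωy, hωy, rfl⟩ := ihy
    obtain ⟨ωz, hωz, rfl⟩ := ihz
    exact ⟨ωy ++ ωz, fun i hi => (mem_append.1 hi).elim (hωy i) (hωz i),
      cs.wordProd_append _ _⟩
  | inv y _ ihy =>
    obtain ⟨ωy, hωy, rfl⟩ := ihy
    exact ⟨ωy.reverse, fun i hi => hωy i (mem_reverse.1 hi), cs.wordProd_reverse _⟩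

theorem exists_isReduced_of_mem_parab {x : W} (hx : x ∈ parab cs L) :
    ∃ ω : List B, (∀ i ∈ ω, i ∈ L) ∧ cs.IsReduced ω ∧ π ω = x := by
  obtain ⟨ω, hω, rfl⟩ := exists_word_of_mem_parab hx
  obtain ⟨ω', hsub, hω', hprod⟩ := cs.exists_isReduced_sublist_wordProd_eq ω
  exact ⟨ω', fun i hi => hω i (hsub.subset hi), hω', hprod⟩

theorem commute_of_mem_parab (hc : ∀ a ∈ A, ∀ c ∈ C, Commute (cs.simple a) (cs.simple c))
    {x y : W} (hx : x ∈ parab cs A) (hy : y ∈ parab cs C) : Commute x y := by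
  have hle : parab cs A ≤ Subgroup.centralizer (parab cs C) := by
    rw [parab, parab, Subgroup.centralizer_closure, Subgroup.closure_le]
    rintro _ ⟨a, ha, rfl⟩ _ ⟨c, hc', rfl⟩
    exact (hc a ha c hc').symm.eq
  exact (hle hx y hy).symm

theorem exists_conj_simple_of_isLeftInversion {z t : W} (hz : z ∈ parab cs L)
    (ht : cs.IsLeftInversion z t) :
    ∃ p ∈ parab cs L, ∃ i ∈ L, t = p * cs.simple i * p⁻¹ := by
  obtain ⟨ω, hωL, hω, rfl⟩ := exists_isReduced_of_mem_parab hz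
  obtain ⟨j, hj, rfl⟩ := List.getElem_of_mem (cs.mem_leftInvSeq_of_isLeftInversion hω ht)
  rw [length_leftInvSeq] at hj
  exact ⟨_, wordProd_mem_parab fun i hi => hωL i ((ω.take_sublist j).subset hi), _,
    hωL _ (ω.getElem_mem hj), cs.getElem_leftInvSeq ω j hj⟩

theorem exists_isRightDescent_of_mem_parab {q : W} (hq : q ∈ parab cs L) (hne : q ≠ 1) :
    ∃ i ∈ L, ℓ (q * cs.simple i) < ℓ q := by
  obtain ⟨ω, hωL, hω, hprod⟩ := exists_isReduced_of_mem_parab (inv_mem hq)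
  cases ω with
  | nil => exact absurd (inv_eq_one.1 hprod.symm) hne
  | cons i ω =>
    refine ⟨i, hωL i mem_cons_self, ?_⟩
    have hlen := cs.length_wordProd_le ω
    rw [← cs.length_inv q, ← hprod, hω.eq, ← cs.length_inv, mul_inv_rev, inv_simple,
      ← hprod, wordProd_cons, simple_mul_simple_cancel_left, length_cons]
    omega

end Parabolic

section MinReps

variable {cs} {L A : Set B}

theorem length_mul_eq_of_forall_length_le {d z : W}
    (hd : ∀ q ∈ parab cs L, ℓ d ≤ ℓ (d * q)) (hz : z ∈ parab cs L) : ℓ (d * z) = ℓ d + ℓ z := by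
  refine le_antisymm (cs.length_mul_le d z) (not_lt.1 fun hlt => ?_)
  obtain ⟨t, htd, htz⟩ := cs.exists_isRightInversion_isLeftInversion_of_length_mul_lt hlt
  obtain ⟨p, hp, i, hi, rfl⟩ := exists_conj_simple_of_isLeftInversion hz htz
  exact absurd (hd _ (mul_mem (mul_mem hp (simple_mem_parab hi)) (inv_mem hp))) (not_le.2 htd.2)

theorem length_mul_eq_of_mem_minReps {w q : W} (hw : w ∈ minReps cs L) (hq : q ∈ parab cs L) :
    ℓ (w * q) = ℓ w + ℓ q := by
  -- a shortest element `w q₀` of `w W_L` is additive against `W_L`, so a right descent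
  -- of `q₀⁻¹` in `L` would be one of `w`
  obtain ⟨q₀, hq₀, hmin⟩ :=
    (InvImage.wf (fun q => ℓ (w * q)) wellFounded_lt).has_min (parab cs L) ⟨1, one_mem _⟩
  have hd : ∀ q ∈ parab cs L, ℓ (w * q₀) ≤ ℓ (w * q₀ * q) := fun q hq => by
    rw [mul_assoc]
    exact not_lt.1 (hmin _ (mul_mem hq₀ hq))
  obtain rfl : q₀ = 1 := by
    by_contra hne
    obtain ⟨i, hi, hdesc⟩ :=
      exists_isRightDescent_of_mem_parab (inv_mem hq₀) (inv_ne_one.2 hne)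
    have h₁ :=
      length_mul_eq_of_forall_length_le hd (mul_mem (inv_mem hq₀) (simple_mem_parab hi))
    have h₂ := length_mul_eq_of_forall_length_le hd (inv_mem hq₀)
    simp only [← mul_assoc, mul_inv_cancel_right] at h₁ h₂
    have := hw i hi
    omega
  simpa using length_mul_eq_of_forall_length_le hd hq

theorem length_simple_mul_simple {i j : B} (hne : cs.simple i ≠ cs.simple j) :
    ℓ (cs.simple i * cs.simple j) = 2 := by
  have hle := cs.length_mul_le (cs.simple i) (cs.simple j)
  have hpar := cs.length_mul_mod_two (cs.simple i) (cs.simple j)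
  have hpos : ℓ (cs.simple i * cs.simple j) ≠ 0 := fun h0 =>
    hne (mul_eq_one_iff_eq_inv.1 (cs.length_eq_zero_iff.1 h0) |>.trans (inv_simple cs j))
  simp only [length_simple] at hle hpar
  omega

theorem mul_simple_mem_minReps {w : W} (hw : w ∈ minReps cs L) {a : B}
    (hcomm : ∀ l ∈ L, Commute (cs.simple a) (cs.simple l))
    (hne : ∀ l ∈ L, cs.simple a ≠ cs.simple l) : w * cs.simple a ∈ minReps cs L := by
  intro l hl
  have hwl := hw l hl
  rcases cs.length_mul_simple w a with ha | ha
  · -- `w` is then a minimal representative for `{a, l}`, and `s_a s_l` has length two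
    have hw' : w ∈ minReps cs {a, l} := by
      rintro k (rfl | rfl)
      · omega
      · exact hwl
    have := length_mul_eq_of_mem_minReps hw'
      (mul_mem (simple_mem_parab (Set.mem_insert a _))
        (simple_mem_parab (Set.mem_insert_of_mem a rfl)))
    rw [length_simple_mul_simple (hne l hl)] at this
    rw [mul_assoc, this, ha]
    omega
  · rw [mul_assoc, (hcomm l hl).eq, ← mul_assoc]
    rcases cs.length_mul_simple (w * cs.simple l) a with h | h <;> omega

theorem mul_mem_minReps {w x : W} (hw : w ∈ minReps cs L)
    (hcomm : ∀ a ∈ A, ∀ l ∈ L, Commute (cs.simple a) (cs.simple l))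
    (hne : ∀ a ∈ A, ∀ l ∈ L, cs.simple a ≠ cs.simple l) (hx : x ∈ parab cs A) :
    w * x ∈ minReps cs L := by
  obtain ⟨ω, hωA, rfl⟩ := exists_word_of_mem_parab hx
  induction ω generalizing w with
  | nil => simpa using hw
  | cons a ω ih =>
    have ha := hωA a mem_cons_self
    rw [wordProd_cons, ← mul_assoc]
    have hωA' : ∀ b ∈ ω, b ∈ A := fun b hb => hωA b (mem_cons_of_mem a hb)
    exact ih (mul_simple_mem_minReps hw (hcomm a ha) (hne a ha)) hωA' (wordProd_mem_parab hωA')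

end MinReps

section MulOn

variable {cs} {L T : Set B} {f : W → W}

theorem map_one_of_mulOn (hf : ∀ x ∈ parab cs L, ∀ y ∈ parab cs L, f (x * y) = f x * f y) :
    f 1 = 1 := by
  have h := hf 1 (one_mem _) 1 (one_mem _)
  rw [mul_one] at h
  exact left_eq_mul.1 h

theorem map_inv_of_mulOn (hf : ∀ x ∈ parab cs L, ∀ y ∈ parab cs L, f (x * y) = f x * f y)
    {x : W} (hx : x ∈ parab cs L) : f x⁻¹ = (f x)⁻¹ :=
  eq_inv_of_mul_eq_one_right <| by
    rw [← hf _ hx _ (inv_mem hx), mul_inv_cancel, map_one_of_mulOn hf]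

theorem exists_wordProd_eq_map_of_mulOn
    (hf : ∀ x ∈ parab cs L, ∀ y ∈ parab cs L, f (x * y) = f x * f y)
    (hs : ∀ i ∈ L, ∃ j ∈ T, f (cs.simple i) = cs.simple j) {ω : List B}
    (hω : ∀ i ∈ ω, i ∈ L) :
    ∃ ω' : List B, ω'.length = ω.length ∧ (∀ j ∈ ω', j ∈ T) ∧ f (π ω) = π ω' := by
  induction ω with
  | nil => exact ⟨[], rfl, by simp, map_one_of_mulOn hf⟩
  | cons i ω ih =>
    have hi := hω i mem_cons_self
    obtain ⟨ω', hlen, hω'T, hprod⟩ := ih fun b hb => hω b (mem_cons_of_mem i hb)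
    obtain ⟨j, hj, hij⟩ := hs i hi
    refine ⟨j :: ω', by simp [hlen], by simpa [hj] using hω'T, ?_⟩
    rw [wordProd_cons, wordProd_cons, hf _ (simple_mem_parab hi) _
      (wordProd_mem_parab fun b hb => hω b (mem_cons_of_mem i hb)), hij, hprod]

theorem length_map_le_of_mulOn
    (hf : ∀ x ∈ parab cs L, ∀ y ∈ parab cs L, f (x * y) = f x * f y)
    (hs : ∀ i ∈ L, ∃ j, f (cs.simple i) = cs.simple j) {x : W} (hx : x ∈ parab cs L) :
    ℓ (f x) ≤ ℓ x := by
  obtain ⟨ω, hωL, hω, rfl⟩ := exists_isReduced_of_mem_parab hx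
  obtain ⟨ω', hlen, -, hprod⟩ := exists_wordProd_eq_map_of_mulOn (T := Set.univ) hf
    (fun i hi => by simpa using hs i hi) hωL
  rw [hprod, hω.eq, ← hlen]
  exact cs.length_wordProd_le ω'

theorem map_mem_parab_of_mulOn
    (hf : ∀ x ∈ parab cs L, ∀ y ∈ parab cs L, f (x * y) = f x * f y)
    (hs : ∀ i ∈ L, ∃ j ∈ T, f (cs.simple i) = cs.simple j) {x : W} (hx : x ∈ parab cs L) :
    f x ∈ parab cs T := by
  obtain ⟨ω, hωL, rfl⟩ := exists_word_of_mem_parab hx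
  obtain ⟨ω', -, hω'T, hprod⟩ := exists_wordProd_eq_map_of_mulOn hf hs hωL
  exact hprod ▸ wordProd_mem_parab hω'T

theorem exists_simple_eq_of_simple_mem_parab {j : B} (h : cs.simple j ∈ parab cs T) :
    ∃ b ∈ T, cs.simple j = cs.simple b := by
  obtain ⟨ω, hωT, hω, hprod⟩ := exists_isReduced_of_mem_parab h
  obtain ⟨b, rfl⟩ := List.length_eq_one_iff.1 (by rw [← hω.eq, hprod, length_simple])
  exact ⟨b, hωT b mem_cons_self, by rw [← hprod, wordProd_singleton]⟩

end MulOn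

namespace GoodSetup

variable {cs} {I J K : Set B} {σ : W → W}

theorem exists_sigma_simple_eq (h : GoodSetup cs I J K σ) {j : B} (hj : j ∈ J) :
    ∃ i ∈ I, σ (cs.simple i) = cs.simple j := by
  obtain ⟨y, hy, hyj⟩ := h.bijSigma.surjOn (simple_mem_parab hj)
  have hmem : σ y ∈ parab cs {b | ∃ i ∈ I, σ (cs.simple i) = cs.simple b} :=
    map_mem_parab_of_mulOn h.mulSigma (fun i hi => by
      obtain ⟨j, -, hij⟩ := h.simpleSigma i hi
      exact ⟨j, ⟨i, hi, hij⟩, hij⟩) hy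
  rw [hyj] at hmem
  obtain ⟨b, ⟨i, hi, hib⟩, hjb⟩ := exists_simple_eq_of_simple_mem_parab hmem
  exact ⟨i, hi, hib.trans hjb.symm⟩

theorem length_sigma (h : GoodSetup cs I J K σ) {x : W} (hx : x ∈ parab cs I) :
    ℓ (σ x) = ℓ x := by
  refine le_antisymm (length_map_le_of_mulOn h.mulSigma
    (fun i hi => (h.simpleSigma i hi).imp fun _ hj => hj.2) hx) ?_
  -- the inverse of `σ` on `W_J` is again multiplicative and sends simple reflections to
  -- simple reflections
  set g := Function.invFunOn σ (parab cs I)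
  have hgσ : Set.LeftInvOn g σ (parab cs I) := h.bijSigma.injOn.leftInvOn_invFunOn
  have hσg : Set.RightInvOn g σ (parab cs J) := h.bijSigma.surjOn.rightInvOn_invFunOn
  have hgJ : Set.MapsTo g (parab cs J) (parab cs I) := h.bijSigma.surjOn.mapsTo_invFunOn
  have hg : ∀ y₁ ∈ parab cs J, ∀ y₂ ∈ parab cs J, g (y₁ * y₂) = g y₁ * g y₂ :=
    fun y₁ h₁ y₂ h₂ => h.bijSigma.injOn (hgJ (mul_mem h₁ h₂)) (mul_mem (hgJ h₁) (hgJ h₂)) <| by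
      rw [hσg (mul_mem h₁ h₂), h.mulSigma _ (hgJ h₁) _ (hgJ h₂), hσg h₁, hσg h₂]
  have hgs : ∀ j ∈ J, ∃ i, g (cs.simple j) = cs.simple i := fun j hj => by
    obtain ⟨i, hi, hij⟩ := h.exists_sigma_simple_eq hj
    exact ⟨i, by rw [← hij, hgσ (simple_mem_parab hi)]⟩
  calc ℓ x = ℓ (g (σ x)) := by rw [hgσ hx]
    _ ≤ ℓ (σ x) := length_map_le_of_mulOn hg hgs (h.bijSigma.mapsTo hx)

theorem isReflection_sigma_conj (h : GoodSetup cs I J K σ) {p : W} (hp : p ∈ parab cs I)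
    {i : B} (hi : i ∈ I) :
    cs.IsReflection (σ (p * cs.simple i * p⁻¹)) := by
  obtain ⟨j, -, hj⟩ := h.simpleSigma i hi
  rw [h.mulSigma _ (mul_mem hp (simple_mem_parab hi)) _ (inv_mem hp),
    h.mulSigma _ hp _ (simple_mem_parab hi), map_inv_of_mulOn h.mulSigma hp, hj]
  exact ⟨σ p, j, rfl⟩

theorem simple_ne_of_mem_I (h : GoodSetup cs I J K σ) {i l : B} (hi : i ∈ I)
    (hl : l ∈ J ∪ K) :
    cs.simple i ≠ cs.simple l := by
  intro heq
  have hsi : cs.simple i = 1 := by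
    rcases hl with hl | hl
    · exact (h.directProd _ (simple_mem_parab hi) _ (inv_mem (simple_mem_parab hl)) 1 (one_mem _)
        (by rw [heq, mul_inv_cancel, one_mul])).1
    · exact (h.directProd _ (simple_mem_parab hi) 1 (one_mem _) _ (inv_mem (simple_mem_parab hl))
        (by rw [heq, mul_one, mul_inv_cancel])).1
  simpa [hsi] using cs.length_simple i

theorem simple_ne_of_mem_J_of_mem_K (h : GoodSetup cs I J K σ) {j k : B} (hj : j ∈ J)
    (hk : k ∈ K) : cs.simple j ≠ cs.simple k := by
  intro heq
  have hsj := (h.directProd 1 (one_mem _) _ (simple_mem_parab hj) _ (inv_mem (simple_mem_parab hk))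
    (by rw [one_mul, heq, mul_inv_cancel])).2.1
  simpa [hsj] using cs.length_simple j

theorem length_mul_mul (h : GoodSetup cs I J K σ) {w a x y : W} (hw : w ∈ minReps cs (J ∪ K))
    (ha : a ∈ parab cs K) (hx : x ∈ parab cs I) (hy : y ∈ parab cs J) :
    ℓ (w * a * (x * y)) = ℓ (w * x) + ℓ y + ℓ a := by
  have hax : Commute a x := commute_of_mem_parab (fun k hk i hi => (h.commIK i hi k hk).symm) ha hx
  have hay : Commute a y := commute_of_mem_parab (fun k hk j hj => (h.commJK j hj k hk).symm) ha hy
  have hwx : w * x ∈ minReps cs (J ∪ K) := mul_mem_minReps hw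
    (fun i hi l hl => hl.elim (h.commIJ i hi l) (h.commIK i hi l))
    (fun i hi l hl => h.simple_ne_of_mem_I hi hl) hx
  have hy' : y ∈ minReps cs K := by
    simpa using mul_mem_minReps (w := 1) (fun k _ => by simp [length_simple]) h.commJK
      (fun j hj k hk => h.simple_ne_of_mem_J_of_mem_K hj hk) hy
  have hrw : w * a * (x * y) = w * x * (y * a) := by
    calc w * a * (x * y) = w * (a * x) * y := by simp only [mul_assoc]
      _ = w * (x * a) * y := by rw [hax.eq]
      _ = w * x * (a * y) := by simp only [mul_assoc]
      _ = w * x * (y * a) := by rw [hay.eq]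
  rw [hrw, length_mul_eq_of_mem_minReps hwx (mul_mem (parab_mono Set.subset_union_left hy)
    (parab_mono Set.subset_union_right ha)), length_mul_eq_of_mem_minReps hy' ha, add_assoc]

theorem length_le_of_inCoset (h : GoodSetup cs I J K σ) {w v : W} (hw : w ∈ minReps cs (J ∪ K))
    (hv : inCoset cs I K σ w v) : ℓ w ≤ ℓ v := by
  obtain ⟨a, ha, x, hx, rfl⟩ := hv
  rw [h.length_mul_mul hw ha hx (h.bijSigma.mapsTo hx), h.length_sigma hx]
  have := cs.length_le_length_mul_add_right w x
  omega

theorem exists_bruhatLE_of_length_lt (h : GoodSetup cs I J K σ) {w a x : W}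
    (hw : w ∈ minReps cs (J ∪ K)) (ha : a ∈ parab cs K) (hx : x ∈ parab cs I)
    (hlt : ℓ w < ℓ (w * x) + ℓ x) :
    ∃ v', inCoset cs I K σ w v' ∧ BruhatLE cs v' (w * a * (x * σ x)) ∧
      ℓ v' < ℓ (w * a * (x * σ x)) := by
  obtain ⟨t, htr, htl⟩ := cs.exists_isRightInversion_isLeftInversion_of_length_mul_lt
    (u := w * x) (v := x⁻¹) (by simpa using hlt)
  obtain ⟨p, hp, i, hi, hpt⟩ := exists_conj_simple_of_isLeftInversion (inv_mem hx) htl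
  have htI : t ∈ parab cs I := hpt ▸ mul_mem (mul_mem hp (simple_mem_parab hi)) (inv_mem hp)
  have hxt : x * t ∈ parab cs I := mul_mem hx htI
  have hlxt : ℓ (x * t) < ℓ x := by
    have := htl.2
    rwa [← cs.length_inv, mul_inv_rev, inv_inv, htl.1.inv, cs.length_inv x] at this
  have hσ : σ (x * t) = σ x * σ t := h.mulSigma _ hx _ htI
  have hcomm : Commute (σ (x * t)) t :=
    commute_of_mem_parab (fun j hj i hi => (h.commIJ i hi j hj).symm) (h.bijSigma.mapsTo hxt) htI
  have hv₁ : w * a * (x * σ x) * σ t = w * a * (x * σ (x * t)) := by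
    rw [hσ]; simp only [mul_assoc]
  have hv₂ : w * a * (x * σ (x * t)) * t = w * a * (x * t * σ (x * t)) := by
    simp only [mul_assoc, hcomm.eq]
  have l₀ := h.length_mul_mul hw ha hx (h.bijSigma.mapsTo hx)
  have l₁ := h.length_mul_mul hw ha hx (h.bijSigma.mapsTo hxt)
  have l₂ := h.length_mul_mul hw ha hxt (h.bijSigma.mapsTo hxt)
  rw [h.length_sigma hx] at l₀
  rw [h.length_sigma hxt] at l₁ l₂
  have hwxt : ℓ (w * (x * t)) < ℓ (w * x) := by rw [← mul_assoc]; exact htr.2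
  have hb₁ : BruhatLE cs (w * a * (x * σ (x * t))) (w * a * (x * σ x)) := by
    rw [← hv₁]
    refine bruhatLE_mul_of_isRightInversion cs ⟨hpt ▸ h.isReflection_sigma_conj hp hi, ?_⟩
    rw [hv₁, l₀, l₁]
    omega
  have hb₂ : BruhatLE cs (w * a * (x * t * σ (x * t))) (w * a * (x * σ (x * t))) := by
    rw [← hv₂]
    refine bruhatLE_mul_of_isRightInversion cs ⟨htl.1, ?_⟩
    rw [hv₂, l₁, l₂]
    omega
  exact ⟨_, ⟨a, ha, x * t, hxt, rfl⟩, hb₂.trans hb₁, by rw [l₀, l₂]; omega⟩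

theorem exists_bruhatLE_of_length_ne (h : GoodSetup cs I J K σ) {w v : W}
    (hw : w ∈ minReps cs (J ∪ K)) (hv : inCoset cs I K σ w v) (hne : ℓ v ≠ ℓ w) :
    ∃ v', inCoset cs I K σ w v' ∧ BruhatLE cs v' v ∧ ℓ v' < ℓ v := by
  obtain ⟨a, ha, x, hx, rfl⟩ := hv
  by_cases hlt : ℓ w < ℓ (w * x) + ℓ x
  · exact h.exists_bruhatLE_of_length_lt hw ha hx hlt
  have l₀ := h.length_mul_mul hw ha hx (h.bijSigma.mapsTo hx)
  rw [h.length_sigma hx] at l₀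
  have ha1 : a ≠ 1 := by
    rintro rfl
    have := h.length_le_of_inCoset hw ⟨1, ha, x, hx, rfl⟩
    rw [cs.length_one] at l₀
    omega
  obtain ⟨k, hk, hdesc⟩ := exists_isRightDescent_of_mem_parab ha ha1
  have hak : a * cs.simple k ∈ parab cs K := mul_mem ha (simple_mem_parab hk)
  have hcomm : Commute (cs.simple k) (x * σ x) :=
    (commute_of_mem_parab (fun k hk i hi => (h.commIK i hi k hk).symm) (simple_mem_parab hk)
      hx).mul_right
      (commute_of_mem_parab (fun k hk j hj => (h.commJK j hj k hk).symm) (simple_mem_parab hk)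
        (h.bijSigma.mapsTo hx))
  have hrw : w * a * (x * σ x) * cs.simple k = w * (a * cs.simple k) * (x * σ x) := by
    simp only [mul_assoc, hcomm.eq]
  have l₁ := h.length_mul_mul hw hak hx (h.bijSigma.mapsTo hx)
  rw [h.length_sigma hx] at l₁
  refine ⟨_, ⟨_, hak, x, hx, rfl⟩, ?_, by omega⟩
  rw [← hrw]
  exact bruhatLE_mul_of_isRightInversion cs ⟨cs.isReflection_simple k, by rw [hrw]; omega⟩

end GoodSetup

theorem statement_8 (cs : CoxeterSystem M W) (I J K : Set B) (σ : W → W)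
    (h : GoodSetup cs I J K σ) (w : W) (hw : w ∈ minReps cs (J ∪ K)) :
    (∀ v, inCoset cs I K σ w v → ∃ u ∈ MinC cs I K σ w, BruhatLE cs u v) ∧
    MinC cs I K σ w =
      {v : W | inCoset cs I K σ w v ∧
        ∀ v', inCoset cs I K σ w v' → BruhatLE cs v' v → v' = v} := by
  have hmin : ∀ v, inCoset cs I K σ w v → ∃ u ∈ MinC cs I K σ w, BruhatLE cs u v := by
    intro v hv
    obtain ⟨u, hu, hlen, hle⟩ := exists_bruhatLE_length_eq_of_forall_exists_bruhatLE cs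
      (S := {v | inCoset cs I K σ w v})
      (fun v hv hne => h.exists_bruhatLE_of_length_ne hw hv hne) v hv
    exact ⟨u, ⟨hu, hlen⟩, hle⟩
  refine ⟨hmin, Set.ext fun v =>
    ⟨fun ⟨hv, hlen⟩ => ⟨hv, fun v' hv' hle => ?_⟩, fun ⟨hv, hmin'⟩ => ?_⟩⟩
  · exact hle.eq_of_length_le (hlen ▸ h.length_le_of_inCoset hw hv')
  · obtain ⟨u, hu, hle⟩ := hmin v hv
    exact hmin' u hu.1 hle ▸ hu

end BruhatSetup
end
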